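/- arXiv:2209.15505 — 2 statements merged into one kernel-verified Lean document; each statement's English description precedes it below -/
import Mathlib

section
/- (Lemma: bound on the gap between x̄ and z̄) Under the lower-bound, mixing, smoothness, and bounded-variance assumptions, for any R ≥ 0 the Momentum Tracking iterates satisfy ∑_{r=0}^R E‖x̄^{(r)} − z̄^{(r)}‖² ≤ (β²η²/(1−β)⁴) ∑_{r=0}^R E‖(1/N)∑_{i=1}^N ∇f_i(x_i^{(r)})‖² + (β²σ²η²/(N(1−β)⁴)) R. -/
open MeasureTheory
open scoped BigOperators

noncomputable section

/-- Problem data and standing assumptions (lower bound, mixing, smoothness) for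
decentralized optimization over `N` nodes in `ℝ^d`. -/
structure MTProblem (N d : ℕ) (Ω : Type) [mΩ : MeasurableSpace Ω] where
  /-- Probability measure driving the stochastic gradients. -/
  μ : Measure Ω
  prob : IsProbabilityMeasure μ
  fstar : ℝ
  L : ℝ
  σ : ℝ
  p : ℝ
  β : ℝ
  /-- Local objectives `f_i`. -/
  f : Fin N → EuclideanSpace ℝ (Fin d) → ℝ
  /-- Local gradients `∇f_i`. -/
  g : Fin N → EuclideanSpace ℝ (Fin d) → EuclideanSpace ℝ (Fin d)
  /-- Mixing matrix. -/
  W : Fin N → Fin N → ℝ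
  /-- Common initial parameter. -/
  x0 : EuclideanSpace ℝ (Fin d)
  hN : 0 < N
  hβ0 : 0 ≤ β
  hβ1 : β < 1
  hL : 0 < L
  hp0 : 0 < p
  hp1 : p ≤ 1
  hgrad : ∀ i v, HasGradientAt (f i) (g i v) v
  /-- Lower bound: `f⋆ ≤ f(x)` for all `x`. -/
  hlb : ∀ v, fstar ≤ (N : ℝ)⁻¹ * ∑ i, f i v
  /-- `L`-smoothness of each `f_i`. -/
  hsmooth : ∀ i v w, ‖g i v - g i w‖ ≤ L * ‖v - w‖
  hWsymm : ∀ i j, W i j = W j i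
  hWrow : ∀ i, ∑ j, W i j = 1
  hWcol : ∀ j, ∑ i, W i j = 1
  /-- Spectral gap: `‖XW − X̄‖_F² ≤ (1−p)‖X − X̄‖_F²`. -/
  hmix : ∀ X : Fin N → EuclideanSpace ℝ (Fin d),
    ∑ j, ‖(∑ i, W i j • X i) - (N : ℝ)⁻¹ • ∑ i, X i‖ ^ 2
      ≤ (1 - p) * ∑ j, ‖X j - (N : ℝ)⁻¹ • ∑ i, X i‖ ^ 2

namespace MTProblem

variable {N d : ℕ} {Ω : Type} [mΩ : MeasurableSpace Ω]

/-- Global objective `f = (1/N) ∑_i f_i`. -/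
def F (P : MTProblem N d Ω) (v : EuclideanSpace ℝ (Fin d)) : ℝ :=
  (N : ℝ)⁻¹ * ∑ i, P.f i v

/-- Gradient of the global objective, `∇f = (1/N) ∑_i ∇f_i`. -/
def gradF (P : MTProblem N d Ω) (v : EuclideanSpace ℝ (Fin d)) : EuclideanSpace ℝ (Fin d) :=
  (N : ℝ)⁻¹ • ∑ i, P.g i v

end MTProblem

/-- A run of the Momentum Tracking algorithm: trajectories `x, u, c`, realized
stochastic gradients `G r i = ∇F_i(x_i^{(r)}; ξ_i^{(r)})`, together with the update
rules, the standard initialization, and the stochastic-gradient assumptions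
(unbiasedness, bounded variance, independence across nodes and rounds in the form
of orthogonality of the noises). -/
structure MTRun {N d : ℕ} {Ω : Type} [mΩ : MeasurableSpace Ω] (P : MTProblem N d Ω) where
  /-- Step size. -/
  η : ℝ
  hη : 0 < η
  x : ℕ → Fin N → Ω → EuclideanSpace ℝ (Fin d)
  u : ℕ → Fin N → Ω → EuclideanSpace ℝ (Fin d)
  c : ℕ → Fin N → Ω → EuclideanSpace ℝ (Fin d)
  G : ℕ → Fin N → Ω → EuclideanSpace ℝ (Fin d)
  /-- Filtration of the information available at each round. -/
  ℱ : MeasureTheory.Filtration ℕ mΩ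
  hx0 : ∀ i, x 0 i = fun _ => P.x0
  hu0 : ∀ i ω, u 0 i ω = (1 - P.β)⁻¹ • (G 0 i ω - (N : ℝ)⁻¹ • ∑ j, G 0 j ω)
  hc0 : ∀ i, c 0 i = u 0 i
  hu : ∀ r i ω, u (r + 1) i ω = P.β • u r i ω + G r i ω
  hx : ∀ r i ω, x (r + 1) i ω
      = (∑ j, P.W i j • x r j ω) - η • (u (r + 1) i ω - c r i ω)
  hc : ∀ r i ω, c (r + 1) i ω
      = (∑ j, P.W i j • (c r j ω - u (r + 1) j ω)) + u (r + 1) i ω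
  hmeas : ∀ r i, MemLp (G r i) 2 P.μ
  hadapted_x : ∀ r i, StronglyMeasurable[ℱ r] (x r i)
  hadapted_G : ∀ r i, StronglyMeasurable[ℱ (r + 1)] (G r i)
  /-- Unbiasedness: `E[∇F_i(x_i^{(r)};ξ) | ℱ_r] = ∇f_i(x_i^{(r)})`. -/
  hunbiased : ∀ r i,
    MeasureTheory.condExp (ℱ r) P.μ (G r i) =ᵐ[P.μ] fun ω => P.g i (x r i ω)
  /-- Bounded variance. -/
  hvar : ∀ r i, ∫ ω, ‖G r i ω - P.g i (x r i ω)‖ ^ 2 ∂P.μ ≤ P.σ ^ 2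
  /-- Independence across nodes and rounds (orthogonality of the noises). -/
  horth : ∀ r s : ℕ, ∀ i j : Fin N, (r, i) ≠ (s, j) →
    ∫ ω, (inner ℝ (G r i ω - P.g i (x r i ω)) (G s j ω - P.g j (x s j ω)) : ℝ) ∂P.μ = 0

namespace MTRun

variable {N d : ℕ} {Ω : Type} [mΩ : MeasurableSpace Ω] {P : MTProblem N d Ω}

/-- Node-average of the parameters, `x̄^{(r)}`. -/
def xbar (S : MTRun P) (r : ℕ) (ω : Ω) : EuclideanSpace ℝ (Fin d) :=
  (N : ℝ)⁻¹ • ∑ i, S.x r i ω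

/-- Node-average of the momenta, `ū^{(r)}`. -/
def ubar (S : MTRun P) (r : ℕ) (ω : Ω) : EuclideanSpace ℝ (Fin d) :=
  (N : ℝ)⁻¹ • ∑ i, S.u r i ω

/-- Node-average of the correction variables, `c̄^{(r)}`. -/
def cbar (S : MTRun P) (r : ℕ) (ω : Ω) : EuclideanSpace ℝ (Fin d) :=
  (N : ℝ)⁻¹ • ∑ i, S.c r i ω

/-- Auxiliary average `z̄^{(r)}`. -/
def zbar (S : MTRun P) : ℕ → Ω → EuclideanSpace ℝ (Fin d)
  | 0 => S.xbar 0
  | r + 1 => fun ω =>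
      (1 - P.β)⁻¹ • S.xbar (r + 1) ω - (P.β * (1 - P.β)⁻¹) • S.xbar r ω

/-- Auxiliary sequence `d_i^{(r)}`. -/
def dseq (S : MTRun P) : ℕ → Fin N → Ω → EuclideanSpace ℝ (Fin d)
  | 0 => fun i ω => (1 - P.β)⁻¹ • (P.g i (S.xbar 0 ω) - P.gradF (S.xbar 0 ω))
  | r + 1 => fun i ω => P.β • dseq S r i ω + P.g i (S.xbar r ω)

/-- Auxiliary sequence `e_i^{(r)}`. -/
def eseq (S : MTRun P) : ℕ → Fin N → Ω → EuclideanSpace ℝ (Fin d)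
  | 0 => fun _ _ => 0
  | r + 1 => fun i ω => P.β • eseq S r i ω + P.gradF (S.xbar r ω)

/-- Node-average `d̄^{(r)}`. -/
def dbar (S : MTRun P) (r : ℕ) (ω : Ω) : EuclideanSpace ℝ (Fin d) :=
  (N : ℝ)⁻¹ • ∑ i, S.dseq r i ω

/-- Node-average `ē^{(r)}`. -/
def ebar (S : MTRun P) (r : ℕ) (ω : Ω) : EuclideanSpace ℝ (Fin d) :=
  (N : ℝ)⁻¹ • ∑ i, S.eseq r i ω

/-- Consensus distance `Ξ^{(r)} = (1/N) E‖X^{(r)} − X̄^{(r)}‖_F²`. -/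
def Xi (S : MTRun P) (r : ℕ) : ℝ :=
  (N : ℝ)⁻¹ * ∫ ω, (∑ i, ‖S.x r i ω - S.xbar r ω‖ ^ 2) ∂P.μ

/-- Tracking error `ℰ^{(r)} = (1/N) E‖D^{(r+1)} − C^{(r)} − E^{(r+1)}‖_F²`. -/
def EE (S : MTRun P) (r : ℕ) : ℝ :=
  (N : ℝ)⁻¹ *
    ∫ ω, (∑ i, ‖S.dseq (r + 1) i ω - S.c r i ω - S.eseq (r + 1) i ω‖ ^ 2) ∂P.μ

/-- Momentum drift `𝒟^{(r)} = (1/N) E‖D^{(r+1)} − D^{(r)} − E^{(r+1)} + E^{(r)}‖_F²`. -/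
def DD (S : MTRun P) (r : ℕ) : ℝ :=
  (N : ℝ)⁻¹ *
    ∫ ω, (∑ i,
      ‖S.dseq (r + 1) i ω - S.dseq r i ω - S.eseq (r + 1) i ω + S.eseq r i ω‖ ^ 2) ∂P.μ

end MTRun

/-!
Because `W` is column-stochastic and `c̄⁽⁰⁾ = ū⁽⁰⁾ = 0`, the correction variables have zero
mean, so `x̄⁽ʳ⁺¹⁾ = x̄⁽ʳ⁾ - η ū⁽ʳ⁺¹⁾` and `x̄⁽ʳ⁾ - z̄⁽ʳ⁾ = (βη / (1 - β)) ū⁽ʳ⁾`. The averaged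
momentum `ū⁽ʳ⁺¹⁾ = β ū⁽ʳ⁾ + ḡ⁽ʳ⁾ + n̄⁽ʳ⁾` is an `ℱᵣ`-measurable part plus a noise `n̄⁽ʳ⁾` of zero
conditional mean and second moment at most `σ² / N`; Pythagoras and convexity of the square give
`E‖ū⁽ʳ⁺¹⁾‖² ≤ β E‖ū⁽ʳ⁾‖² + E‖ḡ⁽ʳ⁾‖² / (1 - β) + σ² / N`, and summing this recursion bounds
`∑ᵣ E‖ū⁽ʳ⁾‖²` by `(∑ᵣ E‖ḡ⁽ʳ⁾‖² + σ² R / N) / (1 - β)²`.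
-/

open scoped InnerProductSpace

lemma norm_smul_add_sq_le {E : Type*} [SeminormedAddCommGroup E] [NormedSpace ℝ E] {β : ℝ}
    (hβ0 : 0 ≤ β) (hβ1 : β < 1) (u v : E) :
    ‖β • u + v‖ ^ 2 ≤ β * ‖u‖ ^ 2 + (1 - β)⁻¹ * ‖v‖ ^ 2 := by
  have hβ : 0 < 1 - β := by linarith
  have htri : ‖β • u + v‖ ≤ β * ‖u‖ + ‖v‖ := by
    simpa [norm_smul, abs_of_nonneg hβ0] using norm_add_le (β • u) v
  -- convexity of `t ↦ t²` at the point `β ‖u‖ + (1 - β) (‖v‖ / (1 - β))`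
  have hconv : (β * ‖u‖ + ‖v‖) ^ 2 ≤ β * ‖u‖ ^ 2 + (1 - β)⁻¹ * ‖v‖ ^ 2 := by
    have key : β * ‖u‖ ^ 2 + (1 - β)⁻¹ * ‖v‖ ^ 2 - (β * ‖u‖ + ‖v‖) ^ 2
        = (1 - β)⁻¹ * (β * ((1 - β) * ‖u‖ - ‖v‖) ^ 2) := by
      field_simp; ring
    have := mul_nonneg (inv_nonneg.mpr hβ.le) (mul_nonneg hβ0 (sq_nonneg ((1 - β) * ‖u‖ - ‖v‖)))
    linarith
  exact (pow_le_pow_left₀ (norm_nonneg _) htri 2).trans hconv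

lemma sub_mul_sum_range_le_of_le_mul_add {β : ℝ} {a B : ℕ → ℝ} (hβ : 0 ≤ β) (ha0 : a 0 = 0)
    (ha : ∀ r, 0 ≤ a r) (hrec : ∀ r, a (r + 1) ≤ β * a r + B r) (R : ℕ) :
    (1 - β) * ∑ r ∈ Finset.range (R + 1), a r ≤ ∑ r ∈ Finset.range R, B r := by
  have hshift : ∑ r ∈ Finset.range (R + 1), a r = ∑ r ∈ Finset.range R, a (r + 1) := by
    rw [Finset.sum_range_succ', ha0, add_zero]
  have hstep : ∑ r ∈ Finset.range R, a (r + 1) ≤ β * ∑ r ∈ Finset.range R, a r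
      + ∑ r ∈ Finset.range R, B r := by
    rw [Finset.mul_sum, ← Finset.sum_add_distrib]
    exact Finset.sum_le_sum fun r _ => hrec r
  have hmono : ∑ r ∈ Finset.range R, a r ≤ ∑ r ∈ Finset.range (R + 1), a r :=
    Finset.sum_le_sum_of_subset_of_nonneg (Finset.range_subset_range.mpr R.le_succ)
      fun r _ _ => ha r
  nlinarith [mul_le_mul_of_nonneg_left hmono hβ]

namespace MeasureTheory

variable {Ω E F : Type*} {m mΩ : MeasurableSpace Ω} {μ : Measure Ω}

lemma MemLp.comp_lipschitzWith [IsFiniteMeasure μ] [NormedAddCommGroup E]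
    [NormedAddCommGroup F] {g : E → F} {K : NNReal} (hg : LipschitzWith K g) {f : Ω → E}
    {p : ENNReal} (hf : MemLp f p μ) : MemLp (fun ω => g (f ω)) p μ := by
  have hg0 : LipschitzWith K fun v => g v - g 0 :=
    LipschitzWith.of_dist_le_mul fun v w => by
      simpa [dist_eq_norm] using hg.dist_le_mul v w
  convert (hg0.comp_memLp (by simp) hf).add (memLp_const (g 0)) using 1
  ext ω
  simp

variable [NormedAddCommGroup E] [InnerProductSpace ℝ E]

lemma MemLp.integrable_inner {Y Z : Ω → E} (hY : MemLp Y 2 μ) (hZ : MemLp Z 2 μ) :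
    Integrable (fun ω => ⟪Y ω, Z ω⟫_ℝ) μ := by
  refine ((hY.integrable_norm_pow two_ne_zero).add (hZ.integrable_norm_pow two_ne_zero)).mono'
    (hY.1.inner hZ.1) (ae_of_all _ fun ω => ?_)
  rw [Real.norm_eq_abs, Pi.add_apply]
  nlinarith [abs_real_inner_le_norm (Y ω) (Z ω), sq_nonneg (‖Y ω‖ - ‖Z ω‖)]

lemma integral_norm_sum_sq_of_pairwise_integral_inner_eq_zero {ι : Type*} [Fintype ι]
    {Z : ι → Ω → E} (hZ : ∀ i, MemLp (Z i) 2 μ)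
    (horth : Pairwise fun i j => ∫ ω, ⟪Z i ω, Z j ω⟫_ℝ ∂μ = 0) :
    ∫ ω, ‖∑ i, Z i ω‖ ^ 2 ∂μ = ∑ i, ∫ ω, ‖Z i ω‖ ^ 2 ∂μ := by
  have hexpand : ∀ ω, ‖∑ i, Z i ω‖ ^ 2 = ∑ i, ∑ j, ⟪Z i ω, Z j ω⟫_ℝ := fun ω => by
    rw [← real_inner_self_eq_norm_sq, sum_inner]
    simp_rw [inner_sum]
  simp_rw [hexpand]
  rw [integral_finsetSum _ fun i _ => integrable_finsetSum _ fun j _ =>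
    (hZ i).integrable_inner (hZ j)]
  refine Finset.sum_congr rfl fun i _ => ?_
  rw [integral_finsetSum _ fun j _ => (hZ i).integrable_inner (hZ j),
    Finset.sum_eq_single i (fun j _ hji => horth hji.symm) (by simp)]
  simp_rw [real_inner_self_eq_norm_sq]

variable [CompleteSpace E] [IsFiniteMeasure μ]

lemma integral_inner_eq_zero_of_condExp_eq_zero (hm : m ≤ mΩ) {Y Z : Ω → E}
    (hYm : StronglyMeasurable[m] Y) (hY : MemLp Y 2 μ) (hZ : MemLp Z 2 μ)
    (hZ0 : μ[Z|m] =ᵐ[μ] 0) :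
    ∫ ω, ⟪Y ω, Z ω⟫_ℝ ∂μ = 0 := by
  rw [← integral_condExp hm]
  calc ∫ ω, (μ[fun ω => ⟪Y ω, Z ω⟫_ℝ|m]) ω ∂μ = ∫ ω, ⟪Y ω, (μ[Z|m]) ω⟫_ℝ ∂μ :=
        integral_congr_ae (condExp_bilin_of_stronglyMeasurable_left (innerSL ℝ) hYm
          (hY.integrable_inner hZ) (hZ.integrable one_le_two))
    _ = 0 := by
        rw [integral_congr_ae (hZ0.mono fun ω hω => by rw [hω])]
        simp

lemma integral_norm_add_sq_of_condExp_eq_zero (hm : m ≤ mΩ) {Y Z : Ω → E}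
    (hYm : StronglyMeasurable[m] Y) (hY : MemLp Y 2 μ) (hZ : MemLp Z 2 μ)
    (hZ0 : μ[Z|m] =ᵐ[μ] 0) :
    ∫ ω, ‖Y ω + Z ω‖ ^ 2 ∂μ = ∫ ω, ‖Y ω‖ ^ 2 ∂μ + ∫ ω, ‖Z ω‖ ^ 2 ∂μ := by
  simp_rw [norm_add_sq_real]
  have hYY := hY.integrable_norm_pow two_ne_zero
  have hYZ := (hY.integrable_inner hZ).const_mul 2
  have hYYZ : Integrable (fun ω => ‖Y ω‖ ^ 2 + 2 * ⟪Y ω, Z ω⟫_ℝ) μ := hYY.add hYZ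
  rw [integral_add hYYZ (hZ.integrable_norm_pow two_ne_zero), integral_add hYY hYZ,
    integral_const_mul, integral_inner_eq_zero_of_condExp_eq_zero hm hYm hY hZ hZ0]
  ring

end MeasureTheory

namespace MTProblem

variable {N d : ℕ} {Ω : Type} [MeasurableSpace Ω] (P : MTProblem N d Ω)

lemma lipschitzWith_g (i : Fin N) : LipschitzWith (Real.toNNReal P.L) (P.g i) :=
  LipschitzWith.of_dist_le_mul fun v w => by
    rw [dist_eq_norm, dist_eq_norm, Real.coe_toNNReal _ P.hL.le]
    exact P.hsmooth i v w

lemma sum_sum_W_smul {E : Type*} [AddCommGroup E] [Module ℝ E] (v : Fin N → E) :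
    ∑ i, ∑ j, P.W i j • v j = ∑ j, v j := by
  rw [Finset.sum_comm]
  simp_rw [← Finset.sum_smul, P.hWcol, one_smul]

end MTProblem

namespace MTRun

variable {N d : ℕ} {Ω : Type} [MeasurableSpace Ω] {P : MTProblem N d Ω} (S : MTRun P)

attribute [local instance] MTProblem.prob

def gbar (r : ℕ) (ω : Ω) : EuclideanSpace ℝ (Fin d) := (N : ℝ)⁻¹ • ∑ i, P.g i (S.x r i ω)

def noise (r : ℕ) (i : Fin N) (ω : Ω) : EuclideanSpace ℝ (Fin d) :=
  S.G r i ω - P.g i (S.x r i ω)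

def nbar (r : ℕ) (ω : Ω) : EuclideanSpace ℝ (Fin d) := (N : ℝ)⁻¹ • ∑ i, S.noise r i ω

lemma sum_u_zero (ω : Ω) : ∑ i, S.u 0 i ω = 0 := by
  have hN : (N : ℝ) ≠ 0 := Nat.cast_ne_zero.mpr P.hN.ne'
  simp only [S.hu0, ← Finset.smul_sum, Finset.sum_sub_distrib, Finset.sum_const,
    Finset.card_univ, Fintype.card_fin, ← Nat.cast_smul_eq_nsmul ℝ N, inv_smul_smul₀ hN, sub_self,
    smul_zero]

lemma ubar_zero (ω : Ω) : S.ubar 0 ω = 0 := by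
  rw [ubar, S.sum_u_zero, smul_zero]

lemma ubar_succ (r : ℕ) (ω : Ω) :
    S.ubar (r + 1) ω = P.β • S.ubar r ω + S.gbar r ω + S.nbar r ω := by
  simp only [ubar, gbar, nbar, noise, S.hu, add_assoc, ← smul_add,
    ← Finset.sum_add_distrib, add_sub_cancel, Finset.smul_sum, smul_comm P.β]

lemma sum_c_eq_zero (r : ℕ) (ω : Ω) : ∑ i, S.c r i ω = 0 := by
  induction r with
  | zero => simp_rw [S.hc0, S.sum_u_zero]
  | succ r ih =>
    simp_rw [S.hc, Finset.sum_add_distrib, P.sum_sum_W_smul, Finset.sum_sub_distrib, ih]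
    abel

lemma xbar_succ (r : ℕ) (ω : Ω) : S.xbar (r + 1) ω = S.xbar r ω - S.η • S.ubar (r + 1) ω := by
  simp_rw [xbar, ubar, S.hx, Finset.sum_sub_distrib, P.sum_sum_W_smul, ← Finset.smul_sum,
    Finset.sum_sub_distrib, S.sum_c_eq_zero, sub_zero, smul_sub, smul_comm S.η]

lemma xbar_sub_zbar (r : ℕ) (ω : Ω) :
    S.xbar r ω - S.zbar r ω = (P.β * (1 - P.β)⁻¹ * S.η) • S.ubar r ω := by
  cases r with
  | zero => simp [zbar, ubar_zero]
  | succ r =>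
    have hβ : 1 - P.β ≠ 0 := by linarith [P.hβ1]
    simp only [zbar, S.xbar_succ r]
    have hcoef : (1 : ℝ) - (1 - P.β)⁻¹ + P.β * (1 - P.β)⁻¹ = 0 := by field_simp; ring
    linear_combination (norm := module) hcoef • S.xbar r ω - (S.η * hcoef) • S.ubar (r + 1) ω

lemma integral_norm_xbar_sub_zbar_sq (r : ℕ) :
    ∫ ω, ‖S.xbar r ω - S.zbar r ω‖ ^ 2 ∂P.μ
      = (P.β * (1 - P.β)⁻¹ * S.η) ^ 2 * ∫ ω, ‖S.ubar r ω‖ ^ 2 ∂P.μ := by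
  have hpt : ∀ ω, ‖S.xbar r ω - S.zbar r ω‖ ^ 2
      = (P.β * (1 - P.β)⁻¹ * S.η) ^ 2 * ‖S.ubar r ω‖ ^ 2 := fun ω => by
    rw [S.xbar_sub_zbar, norm_smul, mul_pow, Real.norm_eq_abs, sq_abs]
  simp_rw [hpt, integral_const_mul]

lemma memLp_u (r : ℕ) (i : Fin N) : MemLp (S.u r i) 2 P.μ := by
  induction r generalizing i with
  | zero =>
    rw [funext (S.hu0 i)]
    exact ((S.hmeas 0 i).sub ((memLp_finsetSum Finset.univ fun j _ => S.hmeas 0 j).const_smul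
      (N : ℝ)⁻¹)).const_smul (1 - P.β)⁻¹
  | succ r ih =>
    rw [funext (S.hu r i)]
    exact ((ih i).const_smul P.β).add (S.hmeas r i)

lemma memLp_c (r : ℕ) (i : Fin N) : MemLp (S.c r i) 2 P.μ := by
  induction r generalizing i with
  | zero => rw [S.hc0]; exact S.memLp_u 0 i
  | succ r ih =>
    rw [funext (S.hc r i)]
    exact (memLp_finsetSum Finset.univ fun j _ =>
      ((ih j).sub (S.memLp_u (r + 1) j)).const_smul (P.W i j)).add (S.memLp_u (r + 1) i)

lemma memLp_x (r : ℕ) (i : Fin N) : MemLp (S.x r i) 2 P.μ := by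
  induction r generalizing i with
  | zero => rw [S.hx0]; exact memLp_const _
  | succ r ih =>
    rw [funext (S.hx r i)]
    exact (memLp_finsetSum Finset.univ fun j _ => (ih j).const_smul (P.W i j)).sub
      (((S.memLp_u (r + 1) i).sub (S.memLp_c r i)).const_smul S.η)

lemma memLp_gx (r : ℕ) (i : Fin N) : MemLp (fun ω => P.g i (S.x r i ω)) 2 P.μ :=
  (S.memLp_x r i).comp_lipschitzWith (P.lipschitzWith_g i)

lemma memLp_noise (r : ℕ) (i : Fin N) : MemLp (S.noise r i) 2 P.μ :=
  (S.hmeas r i).sub (S.memLp_gx r i)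

lemma memLp_ubar (r : ℕ) : MemLp (S.ubar r) 2 P.μ :=
  (memLp_finsetSum Finset.univ fun i _ => S.memLp_u r i).const_smul (N : ℝ)⁻¹

lemma memLp_gbar (r : ℕ) : MemLp (S.gbar r) 2 P.μ :=
  (memLp_finsetSum Finset.univ fun i _ => S.memLp_gx r i).const_smul (N : ℝ)⁻¹

lemma memLp_nbar (r : ℕ) : MemLp (S.nbar r) 2 P.μ :=
  (memLp_finsetSum Finset.univ fun i _ => S.memLp_noise r i).const_smul (N : ℝ)⁻¹

lemma stronglyMeasurable_gx (r : ℕ) (i : Fin N) :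
    StronglyMeasurable[S.ℱ r] fun ω => P.g i (S.x r i ω) :=
  (P.lipschitzWith_g i).continuous.comp_stronglyMeasurable (S.hadapted_x r i)

lemma stronglyMeasurable_gbar (r : ℕ) : StronglyMeasurable[S.ℱ r] (S.gbar r) :=
  (Finset.stronglyMeasurable_fun_sum Finset.univ fun i _ =>
    S.stronglyMeasurable_gx r i).const_smul (N : ℝ)⁻¹

lemma stronglyMeasurable_nbar (r : ℕ) : StronglyMeasurable[S.ℱ (r + 1)] (S.nbar r) :=
  (Finset.stronglyMeasurable_fun_sum Finset.univ fun i _ => (S.hadapted_G r i).sub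
    ((S.stronglyMeasurable_gx r i).mono (S.ℱ.mono r.le_succ))).const_smul (N : ℝ)⁻¹

lemma stronglyMeasurable_ubar (r : ℕ) : StronglyMeasurable[S.ℱ r] (S.ubar r) := by
  induction r with
  | zero => rw [funext S.ubar_zero]; exact stronglyMeasurable_const
  | succ r ih =>
    rw [funext (S.ubar_succ r)]
    exact (((ih.const_smul P.β).add (S.stronglyMeasurable_gbar r)).mono
      (S.ℱ.mono r.le_succ)).add (S.stronglyMeasurable_nbar r)

lemma condExp_noise (r : ℕ) (i : Fin N) : P.μ[S.noise r i|S.ℱ r] =ᵐ[P.μ] 0 := by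
  have hgx := (S.memLp_gx r i).integrable one_le_two
  show P.μ[S.G r i - fun ω => P.g i (S.x r i ω)|S.ℱ r] =ᵐ[P.μ] 0
  filter_upwards [condExp_sub ((S.hmeas r i).integrable one_le_two) hgx (S.ℱ r),
    S.hunbiased r i] with ω hsub hG
  rw [hsub, Pi.sub_apply, hG,
    condExp_of_stronglyMeasurable (S.ℱ.le r) (S.stronglyMeasurable_gx r i) hgx, sub_self]
  rfl

lemma condExp_nbar (r : ℕ) : P.μ[S.nbar r|S.ℱ r] =ᵐ[P.μ] 0 := by
  have hsum : S.nbar r = (N : ℝ)⁻¹ • ∑ i, S.noise r i := by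
    funext ω; simp only [nbar, Pi.smul_apply, Finset.sum_apply]
  rw [hsum]
  filter_upwards [condExp_smul (N : ℝ)⁻¹ (∑ i, S.noise r i) (S.ℱ r),
    condExp_finsetSum (s := Finset.univ) (fun i _ => (S.memLp_noise r i).integrable one_le_two)
      (S.ℱ r), ae_all_iff.2 fun i => S.condExp_noise r i] with ω hsmul hsum hnoise
  rw [hsmul, Pi.smul_apply, hsum, Finset.sum_apply]
  simp [hnoise]

lemma integral_norm_nbar_sq_le (r : ℕ) : ∫ ω, ‖S.nbar r ω‖ ^ 2 ∂P.μ ≤ P.σ ^ 2 / N := by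
  have hN : (0 : ℝ) < N := Nat.cast_pos.mpr P.hN
  have horth := integral_norm_sum_sq_of_pairwise_integral_inner_eq_zero (S.memLp_noise r)
    fun i j hij => S.horth r r i j (by simpa using hij)
  calc ∫ ω, ‖S.nbar r ω‖ ^ 2 ∂P.μ = (N : ℝ)⁻¹ ^ 2 * ∫ ω, ‖∑ i, S.noise r i ω‖ ^ 2 ∂P.μ := by
        simp_rw [nbar, norm_smul, mul_pow, Real.norm_eq_abs, sq_abs]
        exact integral_const_mul _ _
    _ ≤ (N : ℝ)⁻¹ ^ 2 * ∑ _i : Fin N, P.σ ^ 2 := by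
        rw [horth]
        gcongr with i
        exact S.hvar r i
    _ = P.σ ^ 2 / N := by
        rw [Finset.sum_const, Finset.card_univ, Fintype.card_fin, nsmul_eq_mul]
        field_simp

lemma integral_norm_ubar_succ_sq_le (r : ℕ) :
    ∫ ω, ‖S.ubar (r + 1) ω‖ ^ 2 ∂P.μ ≤ P.β * ∫ ω, ‖S.ubar r ω‖ ^ 2 ∂P.μ
      + ((1 - P.β)⁻¹ * ∫ ω, ‖S.gbar r ω‖ ^ 2 ∂P.μ + P.σ ^ 2 / N) := by
  have hY := ((S.memLp_ubar r).const_smul P.β).add (S.memLp_gbar r)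
  have hu := (S.memLp_ubar r).integrable_norm_pow two_ne_zero
  have hg := (S.memLp_gbar r).integrable_norm_pow two_ne_zero
  have hpyth := integral_norm_add_sq_of_condExp_eq_zero (S.ℱ.le r)
    (((S.stronglyMeasurable_ubar r).const_smul P.β).add (S.stronglyMeasurable_gbar r))
    hY (S.memLp_nbar r) (S.condExp_nbar r)
  have hconv : ∫ ω, ‖P.β • S.ubar r ω + S.gbar r ω‖ ^ 2 ∂P.μ
      ≤ P.β * ∫ ω, ‖S.ubar r ω‖ ^ 2 ∂P.μ + (1 - P.β)⁻¹ * ∫ ω, ‖S.gbar r ω‖ ^ 2 ∂P.μ := by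
    rw [← integral_const_mul, ← integral_const_mul,
      ← integral_add (hu.const_mul _) (hg.const_mul _)]
    exact integral_mono (hY.integrable_norm_pow two_ne_zero)
      ((hu.const_mul _).add (hg.const_mul _)) fun ω => norm_smul_add_sq_le P.hβ0 P.hβ1 _ _
  simp_rw [S.ubar_succ r]
  have := S.integral_norm_nbar_sq_le r
  simp only [Pi.add_apply, Pi.smul_apply] at hpyth
  linarith

lemma sum_integral_norm_ubar_sq_le (R : ℕ) :
    ∑ r ∈ Finset.range (R + 1), ∫ ω, ‖S.ubar r ω‖ ^ 2 ∂P.μ ≤ ((1 - P.β) ^ 2)⁻¹ *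
      (∑ r ∈ Finset.range (R + 1), ∫ ω, ‖S.gbar r ω‖ ^ 2 ∂P.μ + P.σ ^ 2 / N * R) := by
  have hβ : 0 < 1 - P.β := sub_pos.mpr P.hβ1
  have hrec := sub_mul_sum_range_le_of_le_mul_add P.hβ0
    (a := fun r => ∫ ω, ‖S.ubar r ω‖ ^ 2 ∂P.μ) (by simp [S.ubar_zero])
    (fun r => integral_nonneg fun _ => sq_nonneg _) S.integral_norm_ubar_succ_sq_le R
  have hgrow : ∑ r ∈ Finset.range R, ∫ ω, ‖S.gbar r ω‖ ^ 2 ∂P.μ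
      ≤ ∑ r ∈ Finset.range (R + 1), ∫ ω, ‖S.gbar r ω‖ ^ 2 ∂P.μ :=
    Finset.sum_le_sum_of_subset_of_nonneg (Finset.range_subset_range.mpr R.le_succ)
      fun r _ _ => integral_nonneg fun _ => sq_nonneg _
  have hnoise : 0 ≤ P.σ ^ 2 / N * R := by positivity
  rw [Finset.sum_add_distrib, ← Finset.mul_sum, Finset.sum_const, Finset.card_range,
    nsmul_eq_mul] at hrec
  rw [← div_eq_inv_mul, le_div_iff₀ (by positivity)]
  have := mul_le_mul_of_nonneg_left hrec hβ.le
  rw [mul_add, mul_inv_cancel_left₀ hβ.ne'] at this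
  nlinarith [mul_nonneg P.hβ0 hnoise]

end MTRun

/-- **Lemma** (bound on the gap between `x̄` and `z̄`): for any `R ≥ 0`,
`∑_{r=0}^R E‖x̄^{(r)} − z̄^{(r)}‖² ≤ (β²η²/(1−β)⁴) ∑_{r=0}^R E‖(1/N)∑ᵢ∇f_i(x_i^{(r)})‖²
  + (β²σ²η²/(N(1−β)⁴)) R`. -/
theorem xbar_zbar_gap_bound
    (N d : ℕ) (Ω : Type) [mΩ : MeasurableSpace Ω]
    (P : MTProblem N d Ω) (S : MTRun P) (R : ℕ) :
    ∑ r ∈ Finset.range (R + 1), ∫ ω, ‖S.xbar r ω - S.zbar r ω‖ ^ 2 ∂P.μ ≤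
      P.β ^ 2 * S.η ^ 2 / (1 - P.β) ^ 4 *
          ∑ r ∈ Finset.range (R + 1),
            ∫ ω, ‖(N : ℝ)⁻¹ • ∑ i, P.g i (S.x r i ω)‖ ^ 2 ∂P.μ
        + P.β ^ 2 * P.σ ^ 2 * S.η ^ 2 / ((N : ℝ) * (1 - P.β) ^ 4) * R := by
  have hβ : 1 - P.β ≠ 0 := (sub_pos.mpr P.hβ1).ne'
  simp_rw [S.integral_norm_xbar_sub_zbar_sq, ← Finset.mul_sum]
  calc _ ≤ (P.β * (1 - P.β)⁻¹ * S.η) ^ 2 * (((1 - P.β) ^ 2)⁻¹ *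
          (∑ r ∈ Finset.range (R + 1), ∫ ω, ‖S.gbar r ω‖ ^ 2 ∂P.μ + P.σ ^ 2 / N * R)) :=
        mul_le_mul_of_nonneg_left (S.sum_integral_norm_ubar_sq_le R) (sq_nonneg _)
    _ = _ := by
        simp only [MTRun.gbar]
        field_simp
end
end

section
/- (Lemma: bound on ‖ū − d̄‖²) Under the lower-bound, mixing, smoothness, and bounded-variance assumptions, for every round r ≥ 0 the Momentum Tracking iterates satisfy E‖ū^{(r+1)} − d̄^{(r+1)}‖² ≤ (L²/(1−β)) ∑_{k=0}^r β^{r−k} Ξ^{(k)} + σ²/(N(1−β)²). -/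
open MeasureTheory
open scoped BigOperators

noncomputable section

namespace MTRun

section Aux

variable {N d : ℕ} {Ω : Type} [mΩ : MeasurableSpace Ω] {P : MTProblem N d Ω}

private lemma Npos (P : MTProblem N d Ω) : (0:ℝ) < (N:ℝ) := by exact_mod_cast P.hN

private lemma tpos (P : MTProblem N d Ω) : (0:ℝ) < 1 - P.β := by linarith [P.hβ1]

/-- The bias term `b^{(r)}`. -/
def bfun (S : MTRun P) (r : ℕ) (ω : Ω) : EuclideanSpace ℝ (Fin d) :=
  (N : ℝ)⁻¹ • ∑ i, (P.g i (S.x r i ω) - P.g i (S.xbar r ω))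

/-- The noise term `n^{(r)}`. -/
def nfun (S : MTRun P) (r : ℕ) (ω : Ω) : EuclideanSpace ℝ (Fin d) :=
  (N : ℝ)⁻¹ • ∑ i, (S.G r i ω - P.g i (S.x r i ω))

/-- `v^{(r)} = ū^{(r)} - d̄^{(r)}`. -/
def vfun (S : MTRun P) (r : ℕ) (ω : Ω) : EuclideanSpace ℝ (Fin d) :=
  S.ubar r ω - S.dbar r ω

lemma gLip (i : Fin N) : LipschitzWith P.L.toNNReal (P.g i) := by
  apply LipschitzWith.of_dist_le_mul
  intro v w
  rw [dist_eq_norm, dist_eq_norm]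
  calc ‖P.g i v - P.g i w‖ ≤ P.L * ‖v - w‖ := P.hsmooth i v w
    _ = P.L.toNNReal * ‖v - w‖ := by rw [Real.coe_toNNReal _ P.hL.le]

lemma memℒp_g_comp {v : Ω → EuclideanSpace ℝ (Fin d)} (hv : MemLp v 2 P.μ) (i : Fin N) :
    MemLp (fun ω => P.g i (v ω)) 2 P.μ := by
  haveI := P.prob
  have h1 : LipschitzWith P.L.toNNReal (fun w => P.g i w - P.g i 0) := by
    apply LipschitzWith.of_dist_le_mul
    intro a b
    rw [dist_eq_norm, dist_eq_norm, sub_sub_sub_cancel_right]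
    calc ‖P.g i a - P.g i b‖ ≤ P.L * ‖a - b‖ := P.hsmooth i a b
      _ = P.L.toNNReal * ‖a - b‖ := by rw [Real.coe_toNNReal _ P.hL.le]
  have h2 : MemLp ((fun w => P.g i w - P.g i 0) ∘ v) 2 P.μ :=
    h1.comp_memLp (by simp) hv
  have h3 : (fun ω => P.g i (v ω))
      = fun ω => ((fun w => P.g i w - P.g i 0) ∘ v) ω + P.g i 0 := by
    funext ω; simp
  rw [h3]
  exact h2.add (memLp_const _)

lemma memℒp_xuc (S : MTRun P) : ∀ r : ℕ,
    (∀ i, MemLp (S.x r i) 2 P.μ) ∧ (∀ i, MemLp (S.u r i) 2 P.μ) ∧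
      (∀ i, MemLp (S.c r i) 2 P.μ) := by
  haveI := P.prob
  intro r
  induction r with
  | zero =>
    have hu : ∀ i, MemLp (S.u 0 i) 2 P.μ := by
      intro i
      have h : S.u 0 i = fun ω => (1 - P.β)⁻¹ • (S.G 0 i ω - (N:ℝ)⁻¹ • ∑ j, S.G 0 j ω) :=
        funext (S.hu0 i)
      rw [h]
      exact (((S.hmeas 0 i).sub
        ((memLp_finset_sum _ (fun j _ => S.hmeas 0 j)).const_smul (N:ℝ)⁻¹)).const_smul (1 - P.β)⁻¹)
    refine ⟨fun i => ?_, hu, fun i => by rw [S.hc0 i]; exact hu i⟩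
    · rw [S.hx0 i]; exact memLp_const _
  | succ r ih =>
    obtain ⟨hx, hu, hc⟩ := ih
    have hu' : ∀ i, MemLp (S.u (r+1) i) 2 P.μ := by
      intro i
      have h : S.u (r+1) i = fun ω => P.β • S.u r i ω + S.G r i ω := funext (S.hu r i)
      rw [h]
      exact ((hu i).const_smul P.β).add (S.hmeas r i)
    refine ⟨fun i => ?_, hu', fun i => ?_⟩
    · have h : S.x (r+1) i
          = fun ω => (∑ j, P.W i j • S.x r j ω) - S.η • (S.u (r+1) i ω - S.c r i ω) :=
        funext (S.hx r i)
      rw [h]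
      exact (memLp_finset_sum _ (fun j _ => (hx j).const_smul (P.W i j))).sub
        (((hu' i).sub (hc i)).const_smul S.η)
    · have h : S.c (r+1) i
          = fun ω => (∑ j, P.W i j • (S.c r j ω - S.u (r+1) j ω)) + S.u (r+1) i ω :=
        funext (S.hc r i)
      rw [h]
      exact (memLp_finset_sum _ (fun j _ => ((hc j).sub (hu' j)).const_smul (P.W i j))).add (hu' i)

lemma memℒp_xbar (S : MTRun P) (r : ℕ) : MemLp (S.xbar r) 2 P.μ :=
  (memLp_finset_sum _ (fun i _ => (S.memℒp_xuc r).1 i)).const_smul (N:ℝ)⁻¹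

lemma memℒp_dseq (S : MTRun P) : ∀ r : ℕ, ∀ i, MemLp (S.dseq r i) 2 P.μ := by
  intro r
  induction r with
  | zero =>
    intro i
    show MemLp (fun ω => (1 - P.β)⁻¹ • (P.g i (S.xbar 0 ω) - P.gradF (S.xbar 0 ω))) 2 P.μ
    have hgr : MemLp (fun ω => P.gradF (S.xbar 0 ω)) 2 P.μ := by
      show MemLp (fun ω => (N:ℝ)⁻¹ • ∑ j, P.g j (S.xbar 0 ω)) 2 P.μ
      exact (memLp_finset_sum _ (fun j _ => memℒp_g_comp (S.memℒp_xbar 0) j)).const_smul (N:ℝ)⁻¹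
    exact ((memℒp_g_comp (S.memℒp_xbar 0) i).sub hgr).const_smul (1 - P.β)⁻¹
  | succ r ih =>
    intro i
    show MemLp (fun ω => P.β • S.dseq r i ω + P.g i (S.xbar r ω)) 2 P.μ
    exact ((ih i).const_smul P.β).add (memℒp_g_comp (S.memℒp_xbar r) i)

lemma memℒp_ubar (S : MTRun P) (r : ℕ) : MemLp (S.ubar r) 2 P.μ :=
  (memLp_finset_sum _ (fun i _ => (S.memℒp_xuc r).2.1 i)).const_smul (N:ℝ)⁻¹

lemma memℒp_dbar (S : MTRun P) (r : ℕ) : MemLp (S.dbar r) 2 P.μ :=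
  (memLp_finset_sum _ (fun i _ => S.memℒp_dseq r i)).const_smul (N:ℝ)⁻¹

lemma memℒp_vfun (S : MTRun P) (r : ℕ) : MemLp (S.vfun r) 2 P.μ :=
  (S.memℒp_ubar r).sub (S.memℒp_dbar r)

lemma memℒp_bfun (S : MTRun P) (r : ℕ) : MemLp (S.bfun r) 2 P.μ :=
  (memLp_finset_sum _ (fun i _ =>
    (memℒp_g_comp ((S.memℒp_xuc r).1 i) i).sub (memℒp_g_comp (S.memℒp_xbar r) i))).const_smul (N:ℝ)⁻¹

lemma memℒp_nfun (S : MTRun P) (r : ℕ) : MemLp (S.nfun r) 2 P.μ :=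
  (memLp_finset_sum _ (fun i _ =>
    (S.hmeas r i).sub (memℒp_g_comp ((S.memℒp_xuc r).1 i) i))).const_smul (N:ℝ)⁻¹

lemma ubar_zero_s9 (S : MTRun P) : S.ubar 0 = fun _ => 0 := by
  funext ω
  have hN : (N:ℝ) ≠ 0 := (Npos P).ne'
  show (N:ℝ)⁻¹ • ∑ i, S.u 0 i ω = 0
  have h : ∑ i, S.u 0 i ω
      = (1 - P.β)⁻¹ • ((∑ i, S.G 0 i ω) - ∑ _i : Fin N, (N:ℝ)⁻¹ • ∑ j, S.G 0 j ω) := by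
    rw [← Finset.sum_sub_distrib, Finset.smul_sum]
    exact Finset.sum_congr rfl fun i _ => S.hu0 i ω
  rw [h, Finset.sum_const, Finset.card_univ, Fintype.card_fin,
    ← Nat.cast_smul_eq_nsmul ℝ,
    show ((N:ℝ) • ((N:ℝ)⁻¹ • ∑ j, S.G 0 j ω)) = ∑ j, S.G 0 j ω from by
      rw [smul_smul, mul_inv_cancel₀ hN, one_smul],
    sub_self, smul_zero, smul_zero]

lemma dbar_zero (S : MTRun P) : S.dbar 0 = fun _ => 0 := by
  funext ω
  have hN : (N:ℝ) ≠ 0 := (Npos P).ne'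
  show (N:ℝ)⁻¹ • ∑ i, S.dseq 0 i ω = 0
  have h : ∑ i, S.dseq 0 i ω
      = (1 - P.β)⁻¹ • ((∑ i, P.g i (S.xbar 0 ω))
          - ∑ _i : Fin N, (N:ℝ)⁻¹ • ∑ j, P.g j (S.xbar 0 ω)) := by
    rw [← Finset.sum_sub_distrib, Finset.smul_sum]
    rfl
  rw [h, Finset.sum_const, Finset.card_univ, Fintype.card_fin,
    ← Nat.cast_smul_eq_nsmul ℝ,
    show ((N:ℝ) • ((N:ℝ)⁻¹ • ∑ j, P.g j (S.xbar 0 ω))) = ∑ j, P.g j (S.xbar 0 ω) from by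
      rw [smul_smul, mul_inv_cancel₀ hN, one_smul],
    sub_self, smul_zero, smul_zero]

lemma vfun_zero (S : MTRun P) : S.vfun 0 = fun _ => 0 := by
  funext ω
  show S.ubar 0 ω - S.dbar 0 ω = 0
  rw [S.ubar_zero_s9, S.dbar_zero]
  simp

lemma ubar_succ_s9 (S : MTRun P) (r : ℕ) :
    S.ubar (r+1) = fun ω => P.β • S.ubar r ω + (N:ℝ)⁻¹ • ∑ i, S.G r i ω := by
  funext ω
  show (N:ℝ)⁻¹ • ∑ i, S.u (r+1) i ω = _
  have h : ∑ i, S.u (r+1) i ω = P.β • (∑ i, S.u r i ω) + ∑ i, S.G r i ω := by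
    rw [Finset.smul_sum, ← Finset.sum_add_distrib]
    exact Finset.sum_congr rfl fun i _ => S.hu r i ω
  rw [h, smul_add, smul_comm]
  rfl

lemma dbar_succ (S : MTRun P) (r : ℕ) :
    S.dbar (r+1) = fun ω => P.β • S.dbar r ω + (N:ℝ)⁻¹ • ∑ i, P.g i (S.xbar r ω) := by
  funext ω
  show (N:ℝ)⁻¹ • ∑ i, S.dseq (r+1) i ω = _
  have h : ∑ i, S.dseq (r+1) i ω
      = P.β • (∑ i, S.dseq r i ω) + ∑ i, P.g i (S.xbar r ω) := by
    rw [Finset.smul_sum, ← Finset.sum_add_distrib]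
    rfl
  rw [h, smul_add, smul_comm]
  rfl

lemma vfun_succ (S : MTRun P) (r : ℕ) :
    S.vfun (r+1) = fun ω => (P.β • S.vfun r ω + S.bfun r ω) + S.nfun r ω := by
  funext ω
  show S.ubar (r+1) ω - S.dbar (r+1) ω = _
  rw [S.ubar_succ_s9, S.dbar_succ]
  have hb : S.bfun r ω + S.nfun r ω
      = (N:ℝ)⁻¹ • ∑ i, S.G r i ω - (N:ℝ)⁻¹ • ∑ i, P.g i (S.xbar r ω) := by
    show (N:ℝ)⁻¹ • ∑ i, (P.g i (S.x r i ω) - P.g i (S.xbar r ω))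
        + (N:ℝ)⁻¹ • ∑ i, (S.G r i ω - P.g i (S.x r i ω))
      = (N:ℝ)⁻¹ • ∑ i, S.G r i ω - (N:ℝ)⁻¹ • ∑ i, P.g i (S.xbar r ω)
    rw [← smul_add, ← Finset.sum_add_distrib, ← smul_sub, ← Finset.sum_sub_distrib]
    congr 1
    exact Finset.sum_congr rfl fun i _ => by abel
  have hv : S.vfun r ω = S.ubar r ω - S.dbar r ω := rfl
  rw [hv, smul_sub]
  have h2 : (P.β • S.ubar r ω + (N:ℝ)⁻¹ • ∑ i, S.G r i ω)
        - (P.β • S.dbar r ω + (N:ℝ)⁻¹ • ∑ i, P.g i (S.xbar r ω))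
      = (P.β • S.ubar r ω - P.β • S.dbar r ω)
        + ((N:ℝ)⁻¹ • ∑ i, S.G r i ω - (N:ℝ)⁻¹ • ∑ i, P.g i (S.xbar r ω)) := by
    abel
  rw [h2, ← hb]
  abel

lemma sm_xbar (S : MTRun P) (r : ℕ) : StronglyMeasurable[S.ℱ r] (S.xbar r) :=
  (Finset.stronglyMeasurable_fun_sum _ (fun i _ => S.hadapted_x r i)).const_smul (N:ℝ)⁻¹

lemma sm_g_comp (S : MTRun P) (j : ℕ) {v : Ω → EuclideanSpace ℝ (Fin d)}
    (hv : StronglyMeasurable[S.ℱ j] v) (i : Fin N) :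
    StronglyMeasurable[S.ℱ j] (fun ω => P.g i (v ω)) :=
  (gLip i).continuous.comp_stronglyMeasurable hv

lemma sm_ubar (S : MTRun P) : ∀ r, StronglyMeasurable[S.ℱ r] (S.ubar r)
  | 0 => by rw [S.ubar_zero_s9]; exact stronglyMeasurable_const
  | (r+1) => by
    rw [S.ubar_succ_s9]
    exact (((S.sm_ubar r).mono (S.ℱ.mono (Nat.le_succ r))).const_smul P.β).add
      ((Finset.stronglyMeasurable_fun_sum _ (fun i _ => S.hadapted_G r i)).const_smul (N:ℝ)⁻¹)

lemma sm_dbar (S : MTRun P) : ∀ r, StronglyMeasurable[S.ℱ r] (S.dbar r)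
  | 0 => by rw [S.dbar_zero]; exact stronglyMeasurable_const
  | (r+1) => by
    rw [S.dbar_succ]
    exact (((S.sm_dbar r).mono (S.ℱ.mono (Nat.le_succ r))).const_smul P.β).add
      ((Finset.stronglyMeasurable_fun_sum _ (fun i _ =>
        S.sm_g_comp (r+1) ((S.sm_xbar r).mono (S.ℱ.mono (Nat.le_succ r))) i)).const_smul (N:ℝ)⁻¹)

lemma sm_vfun (S : MTRun P) (r : ℕ) : StronglyMeasurable[S.ℱ r] (S.vfun r) :=
  (S.sm_ubar r).sub (S.sm_dbar r)

lemma sm_bfun (S : MTRun P) (r : ℕ) : StronglyMeasurable[S.ℱ r] (S.bfun r) :=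
  (Finset.stronglyMeasurable_fun_sum _ (fun i _ =>
    (S.sm_g_comp r (S.hadapted_x r i) i).sub (S.sm_g_comp r (S.sm_xbar r) i))).const_smul (N:ℝ)⁻¹

lemma integrable_mul2 {f g : Ω → ℝ} (hf : MemLp f 2 P.μ) (hg : MemLp g 2 P.μ) :
    Integrable (fun ω => f ω * g ω) P.μ := by
  haveI := P.prob
  refine Integrable.mono' (((hf.norm.integrable_sq).add (hg.norm.integrable_sq)).div_const 2)
    (hf.aestronglyMeasurable.mul hg.aestronglyMeasurable)
    (Filter.Eventually.of_forall fun ω => ?_)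
  simp only [Pi.add_apply, Real.norm_eq_abs, abs_mul]
  have h2 := two_mul_le_add_sq |f ω| |g ω|
  linarith

lemma integrable_inner2 {f g : Ω → EuclideanSpace ℝ (Fin d)}
    (hf : MemLp f 2 P.μ) (hg : MemLp g 2 P.μ) :
    Integrable (fun ω => (inner ℝ (f ω) (g ω) : ℝ)) P.μ := by
  haveI := P.prob
  refine Integrable.mono' (((hf.norm.integrable_sq).add (hg.norm.integrable_sq)).div_const 2)
    (hf.aestronglyMeasurable.inner hg.aestronglyMeasurable)
    (Filter.Eventually.of_forall fun ω => ?_)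
  simp only [Pi.add_apply, Real.norm_eq_abs]
  have h1 := abs_real_inner_le_norm (f ω) (g ω)
  have h2 := two_mul_le_add_sq ‖f ω‖ ‖g ω‖
  linarith

lemma int_normsq {f : Ω → EuclideanSpace ℝ (Fin d)} (hf : MemLp f 2 P.μ) :
    Integrable (fun ω => ‖f ω‖ ^ 2) P.μ :=
  hf.norm.integrable_sq

/-- Orthogonality of the noise at round `r` to any `ℱ r`-measurable `L²` function. -/
lemma integral_inner_noise (S : MTRun P) (r : ℕ) (i : Fin N)
    {Y : Ω → EuclideanSpace ℝ (Fin d)}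
    (hYm : StronglyMeasurable[S.ℱ r] Y) (hY2 : MemLp Y 2 P.μ) :
    ∫ ω, (inner ℝ (Y ω) (S.G r i ω - P.g i (S.x r i ω)) : ℝ) ∂P.μ = 0 := by
  haveI := P.prob
  have hm : S.ℱ r ≤ mΩ := S.ℱ.le r
  haveI : SigmaFinite (P.μ.trim hm) := (isFiniteMeasure_trim hm).toSigmaFinite
  set Z : Ω → EuclideanSpace ℝ (Fin d) := fun ω => S.G r i ω - P.g i (S.x r i ω) with hZdef
  have hgx2 : MemLp (fun ω => P.g i (S.x r i ω)) 2 P.μ :=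
    memℒp_g_comp ((S.memℒp_xuc r).1 i) i
  have hZ2 : MemLp Z 2 P.μ := (S.hmeas r i).sub hgx2
  have hZ1 : Integrable Z P.μ := hZ2.integrable one_le_two
  have hG1 : Integrable (S.G r i) P.μ := (S.hmeas r i).integrable one_le_two
  have hgx1 : Integrable (fun ω => P.g i (S.x r i ω)) P.μ := hgx2.integrable one_le_two
  have hset : ∀ s : Set Ω, MeasurableSet[S.ℱ r] s → ∫ ω in s, Z ω ∂P.μ = 0 := by
    intro s hs
    have h1 : ∫ ω in s, Z ω ∂P.μ
        = (∫ ω in s, S.G r i ω ∂P.μ) - ∫ ω in s, P.g i (S.x r i ω) ∂P.μ :=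
      integral_sub hG1.integrableOn hgx1.integrableOn
    have h2 : ∫ ω in s, S.G r i ω ∂P.μ
        = ∫ ω in s, (P.μ[S.G r i|S.ℱ r]) ω ∂P.μ := (setIntegral_condExp hm hG1 hs).symm
    have h3 : ∫ ω in s, (P.μ[S.G r i|S.ℱ r]) ω ∂P.μ
        = ∫ ω in s, P.g i (S.x r i ω) ∂P.μ :=
      integral_congr_ae (Filter.EventuallyEq.restrict (S.hunbiased r i))
    rw [h1, h2, h3, sub_self]
  have hZj2 : ∀ j : Fin d, MemLp (fun ω => Z ω j) 2 P.μ := fun j => by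
    have h := (EuclideanSpace.proj (𝕜 := ℝ) j).comp_memLp' hZ2
    exact h
  have hYj2 : ∀ j : Fin d, MemLp (fun ω => Y ω j) 2 P.μ := fun j => by
    have h := (EuclideanSpace.proj (𝕜 := ℝ) j).comp_memLp' hY2
    exact h
  have hZj1 : ∀ j, Integrable (fun ω => Z ω j) P.μ := fun j => (hZj2 j).integrable one_le_two
  have hcond0 : ∀ j : Fin d, P.μ[(fun ω => Z ω j)|S.ℱ r] =ᵐ[P.μ] fun _ => (0:ℝ) := by
    intro j
    refine (ae_eq_condExp_of_forall_setIntegral_eq hm (hZj1 j)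
      (fun s _ _ => (integrable_zero _ _ _).integrableOn)
      (fun s hs _ => ?_)
      (StronglyMeasurable.aestronglyMeasurable stronglyMeasurable_const)).symm
    simp only [Pi.zero_apply, integral_zero]
    have hZc : ∫ ω in s, Z ω j ∂P.μ
        = (EuclideanSpace.proj (𝕜 := ℝ) j) (∫ ω in s, Z ω ∂P.μ) := by
      rw [← ContinuousLinearMap.integral_comp_comm _ hZ1.integrableOn]
      rfl
    rw [hZc, hset s hs]
    simp
  have hYjm : ∀ j : Fin d, StronglyMeasurable[S.ℱ r] (fun ω => Y ω j) := fun j =>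
    (EuclideanSpace.proj (𝕜 := ℝ) j).continuous.comp_stronglyMeasurable hYm
  have hmul : ∀ j : Fin d, Integrable (fun ω => Y ω j * Z ω j) P.μ := fun j =>
    integrable_mul2 (hYj2 j) (hZj2 j)
  have hprod0 : ∀ j : Fin d, ∫ ω, Y ω j * Z ω j ∂P.μ = 0 := by
    intro j
    have h1 := condExp_mul_of_stronglyMeasurable_left (μ := P.μ) (hYjm j) (hmul j) (hZj1 j)
    have h2 : (fun ω => Y ω j) * P.μ[(fun ω => Z ω j)|S.ℱ r] =ᵐ[P.μ] fun _ => (0:ℝ) := by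
      filter_upwards [hcond0 j] with ω hω
      simp [hω]
    calc ∫ ω, Y ω j * Z ω j ∂P.μ
        = ∫ ω, (P.μ[(fun ω => Y ω j) * (fun ω => Z ω j)|S.ℱ r]) ω ∂P.μ :=
          (integral_condExp hm).symm
      _ = ∫ _ω, (0:ℝ) ∂P.μ := integral_congr_ae (h1.trans h2)
      _ = 0 := integral_zero _ _
  have hinner : (fun ω => (inner ℝ (Y ω) (Z ω) : ℝ)) = fun ω => ∑ j : Fin d, Y ω j * Z ω j := by
    funext ω
    simp [PiLp.inner_apply, RCLike.inner_apply, conj_trivial]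
    exact Finset.sum_congr rfl fun _ _ => mul_comm _ _
  show ∫ ω, (inner ℝ (Y ω) (Z ω) : ℝ) ∂P.μ = 0
  rw [hinner, integral_finset_sum _ (fun j _ => hmul j)]
  exact Finset.sum_eq_zero fun j _ => hprod0 j

/-- Variance bound for the averaged noise. -/
lemma integral_nsq_le (S : MTRun P) (r : ℕ) :
    ∫ ω, ‖S.nfun r ω‖ ^ 2 ∂P.μ ≤ P.σ ^ 2 / (N : ℝ) := by
  haveI := P.prob
  have hN0 : (0:ℝ) < (N:ℝ) := Npos P
  set Z : Fin N → Ω → EuclideanSpace ℝ (Fin d) :=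
    fun i ω => S.G r i ω - P.g i (S.x r i ω) with hZdef
  have hZ2 : ∀ i, MemLp (Z i) 2 P.μ := fun i =>
    (S.hmeas r i).sub (memℒp_g_comp ((S.memℒp_xuc r).1 i) i)
  have hpt : (fun ω => ‖S.nfun r ω‖ ^ 2)
      = fun ω => ((N:ℝ)⁻¹) ^ 2 * ∑ i, ∑ j, (inner ℝ (Z i ω) (Z j ω) : ℝ) := by
    funext ω
    show ‖(N:ℝ)⁻¹ • ∑ i, Z i ω‖ ^ 2 = _
    rw [norm_smul, mul_pow,
      show ‖∑ i, Z i ω‖ ^ 2 = ∑ i, ∑ j, (inner ℝ (Z i ω) (Z j ω) : ℝ) from by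
        rw [← real_inner_self_eq_norm_sq, sum_inner]; simp_rw [inner_sum]]
    congr 1
    rw [Real.norm_eq_abs, abs_of_nonneg (inv_nonneg.2 hN0.le)]
  rw [hpt, integral_const_mul, integral_finset_sum _ (fun i _ =>
    integrable_finset_sum _ (fun j _ => integrable_inner2 (hZ2 i) (hZ2 j)))]
  have hdiag : ∀ i : Fin N, ∫ ω, (∑ j, (inner ℝ (Z i ω) (Z j ω) : ℝ)) ∂P.μ
      = ∫ ω, (inner ℝ (Z i ω) (Z i ω) : ℝ) ∂P.μ := by
    intro i
    rw [integral_finset_sum _ (fun j _ => integrable_inner2 (hZ2 i) (hZ2 j))]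
    rw [Finset.sum_eq_single_of_mem i (Finset.mem_univ i)]
    intro j _ hji
    exact S.horth r r i j (by simp [Ne.symm hji])
  have hsum : ∑ i, ∫ ω, (∑ j, (inner ℝ (Z i ω) (Z j ω) : ℝ)) ∂P.μ ≤ (N:ℝ) * P.σ ^ 2 := by
    calc ∑ i, ∫ ω, (∑ j, (inner ℝ (Z i ω) (Z j ω) : ℝ)) ∂P.μ
        = ∑ i, ∫ ω, (inner ℝ (Z i ω) (Z i ω) : ℝ) ∂P.μ :=
          Finset.sum_congr rfl fun i _ => hdiag i
      _ ≤ ∑ _i : Fin N, P.σ ^ 2 := by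
          apply Finset.sum_le_sum
          intro i _
          have h := S.hvar r i
          calc ∫ ω, (inner ℝ (Z i ω) (Z i ω) : ℝ) ∂P.μ
              = ∫ ω, ‖Z i ω‖ ^ 2 ∂P.μ := by
                congr 1; funext ω; rw [real_inner_self_eq_norm_sq]
            _ ≤ P.σ ^ 2 := h
      _ = (N:ℝ) * P.σ ^ 2 := by
          rw [Finset.sum_const, Finset.card_univ, Fintype.card_fin, nsmul_eq_mul]
  calc ((N:ℝ)⁻¹) ^ 2 * ∑ i, ∫ ω, (∑ j, (inner ℝ (Z i ω) (Z j ω) : ℝ)) ∂P.μ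
      ≤ ((N:ℝ)⁻¹) ^ 2 * ((N:ℝ) * P.σ ^ 2) :=
        mul_le_mul_of_nonneg_left hsum (by positivity)
    _ = P.σ ^ 2 / (N:ℝ) := by field_simp

/-- Smoothness bound for the averaged bias. -/
lemma integral_bsq_le (S : MTRun P) (r : ℕ) :
    ∫ ω, ‖S.bfun r ω‖ ^ 2 ∂P.μ ≤ P.L ^ 2 * S.Xi r := by
  haveI := P.prob
  have hN0 : (0:ℝ) < (N:ℝ) := Npos P
  have hpt : ∀ ω, ‖S.bfun r ω‖ ^ 2
      ≤ P.L ^ 2 * ((N:ℝ)⁻¹ * ∑ i, ‖S.x r i ω - S.xbar r ω‖ ^ 2) := by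
    intro ω
    set a : Fin N → EuclideanSpace ℝ (Fin d) :=
      fun i => P.g i (S.x r i ω) - P.g i (S.xbar r ω) with ha
    have h1 : ‖S.bfun r ω‖ ^ 2 = ((N:ℝ)⁻¹) ^ 2 * ‖∑ i, a i‖ ^ 2 := by
      show ‖(N:ℝ)⁻¹ • ∑ i, a i‖ ^ 2 = _
      rw [norm_smul, mul_pow, Real.norm_eq_abs, abs_of_nonneg (inv_nonneg.2 hN0.le)]
    have h2 : ‖∑ i, a i‖ ^ 2 ≤ (∑ i, ‖a i‖) ^ 2 :=
      pow_le_pow_left₀ (norm_nonneg _) (norm_sum_le _ _) 2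
    have h3 : (∑ i, ‖a i‖) ^ 2 ≤ (N:ℝ) * ∑ i, ‖a i‖ ^ 2 := by
      have := sq_sum_le_card_mul_sum_sq (s := (Finset.univ : Finset (Fin N)))
        (f := fun i => ‖a i‖)
      simpa [Finset.card_univ] using this
    have h4 : ∑ i, ‖a i‖ ^ 2 ≤ ∑ i, P.L ^ 2 * ‖S.x r i ω - S.xbar r ω‖ ^ 2 := by
      apply Finset.sum_le_sum
      intro i _
      have h := P.hsmooth i (S.x r i ω) (S.xbar r ω)
      calc ‖a i‖ ^ 2 ≤ (P.L * ‖S.x r i ω - S.xbar r ω‖) ^ 2 :=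
            pow_le_pow_left₀ (norm_nonneg _) h 2
        _ = P.L ^ 2 * ‖S.x r i ω - S.xbar r ω‖ ^ 2 := by ring
    have h5 : ∑ i, P.L ^ 2 * ‖S.x r i ω - S.xbar r ω‖ ^ 2
        = P.L ^ 2 * ∑ i, ‖S.x r i ω - S.xbar r ω‖ ^ 2 := by
      rw [Finset.mul_sum]
    have hc : (0:ℝ) ≤ ((N:ℝ)⁻¹) ^ 2 := by positivity
    calc ‖S.bfun r ω‖ ^ 2 = ((N:ℝ)⁻¹) ^ 2 * ‖∑ i, a i‖ ^ 2 := h1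
      _ ≤ ((N:ℝ)⁻¹) ^ 2 * ((N:ℝ) * (P.L ^ 2 * ∑ i, ‖S.x r i ω - S.xbar r ω‖ ^ 2)) := by
          apply mul_le_mul_of_nonneg_left _ hc
          calc ‖∑ i, a i‖ ^ 2 ≤ (∑ i, ‖a i‖) ^ 2 := h2
            _ ≤ (N:ℝ) * ∑ i, ‖a i‖ ^ 2 := h3
            _ ≤ (N:ℝ) * (P.L ^ 2 * ∑ i, ‖S.x r i ω - S.xbar r ω‖ ^ 2) := by
                rw [← h5]; exact mul_le_mul_of_nonneg_left h4 hN0.le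
      _ = P.L ^ 2 * ((N:ℝ)⁻¹ * ∑ i, ‖S.x r i ω - S.xbar r ω‖ ^ 2) := by
          field_simp
  have hint1 : Integrable (fun ω => ‖S.bfun r ω‖ ^ 2) P.μ := int_normsq (S.memℒp_bfun r)
  have hintsum : Integrable (fun ω => ∑ i, ‖S.x r i ω - S.xbar r ω‖ ^ 2) P.μ :=
    integrable_finset_sum _ (fun i _ =>
      int_normsq (((S.memℒp_xuc r).1 i).sub (S.memℒp_xbar r)))
  have hint2 : Integrable
      (fun ω => P.L ^ 2 * ((N:ℝ)⁻¹ * ∑ i, ‖S.x r i ω - S.xbar r ω‖ ^ 2)) P.μ :=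
    (hintsum.const_mul _).const_mul _
  calc ∫ ω, ‖S.bfun r ω‖ ^ 2 ∂P.μ
      ≤ ∫ ω, P.L ^ 2 * ((N:ℝ)⁻¹ * ∑ i, ‖S.x r i ω - S.xbar r ω‖ ^ 2) ∂P.μ :=
        integral_mono hint1 hint2 hpt
    _ = P.L ^ 2 * ((N:ℝ)⁻¹ * ∫ ω, (∑ i, ‖S.x r i ω - S.xbar r ω‖ ^ 2) ∂P.μ) := by
        rw [integral_const_mul, integral_const_mul]
    _ = P.L ^ 2 * S.Xi r := rfl

/-- Pointwise convexity-type inequality. -/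
lemma step_ptwise {β : ℝ} (hβ0 : 0 ≤ β) (hβ1 : β < 1)
    (v b : EuclideanSpace ℝ (Fin d)) :
    ‖β • v + b‖ ^ 2 ≤ β * ‖v‖ ^ 2 + (1 - β)⁻¹ * ‖b‖ ^ 2 := by
  have ht : (0:ℝ) < 1 - β := by linarith
  have h1 : ‖β • v + b‖ ^ 2
      = β ^ 2 * ‖v‖ ^ 2 + 2 * (β * (inner ℝ v b : ℝ)) + ‖b‖ ^ 2 := by
    rw [norm_add_sq_real, real_inner_smul_left, norm_smul, Real.norm_eq_abs,
      abs_of_nonneg hβ0, mul_pow]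
  have hib : (inner ℝ v b : ℝ) ≤ ‖v‖ * ‖b‖ := real_inner_le_norm v b
  refine (mul_le_mul_iff_left₀ ht).1 ?_
  have he : (β * ‖v‖ ^ 2 + (1 - β)⁻¹ * ‖b‖ ^ 2) * (1 - β)
      = β * ‖v‖ ^ 2 * (1 - β) + ‖b‖ ^ 2 := by
    field_simp
  rw [he, h1]
  nlinarith [mul_nonneg hβ0 (sq_nonneg ((1 - β) * ‖v‖ - ‖b‖)),
    mul_le_mul_of_nonneg_left hib (mul_nonneg (mul_nonneg (by norm_num : (0:ℝ) ≤ 2) hβ0) ht.le)]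

/-- One-step recursion bound. -/
lemma integral_step (S : MTRun P) (r : ℕ) :
    ∫ ω, ‖S.vfun (r+1) ω‖ ^ 2 ∂P.μ
      ≤ P.β * ∫ ω, ‖S.vfun r ω‖ ^ 2 ∂P.μ
        + (1 - P.β)⁻¹ * (P.L ^ 2 * S.Xi r) + P.σ ^ 2 / (N : ℝ) := by
  haveI := P.prob
  have ht : (0:ℝ) < 1 - P.β := tpos P
  set Yf : Ω → EuclideanSpace ℝ (Fin d) := fun ω => P.β • S.vfun r ω + S.bfun r ω with hYdef
  have hv2 : MemLp (S.vfun r) 2 P.μ := S.memℒp_vfun r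
  have hb2 : MemLp (S.bfun r) 2 P.μ := S.memℒp_bfun r
  have hn2 : MemLp (S.nfun r) 2 P.μ := S.memℒp_nfun r
  have hY2 : MemLp Yf 2 P.μ := (hv2.const_smul P.β).add hb2
  have hYm : StronglyMeasurable[S.ℱ r] Yf := ((S.sm_vfun r).const_smul P.β).add (S.sm_bfun r)
  have hI1 : Integrable (fun ω => ‖Yf ω‖ ^ 2) P.μ := int_normsq hY2
  have hI2 : Integrable (fun ω => 2 * (inner ℝ (Yf ω) (S.nfun r ω) : ℝ)) P.μ :=
    (integrable_inner2 hY2 hn2).const_mul 2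
  have hI3 : Integrable (fun ω => ‖S.nfun r ω‖ ^ 2) P.μ := int_normsq hn2
  have hpt : (fun ω => ‖S.vfun (r+1) ω‖ ^ 2)
      = fun ω => ‖Yf ω‖ ^ 2 + 2 * (inner ℝ (Yf ω) (S.nfun r ω) : ℝ) + ‖S.nfun r ω‖ ^ 2 := by
    funext ω
    rw [S.vfun_succ r]
    exact norm_add_sq_real _ _
  have hsplit : ∫ ω, ‖S.vfun (r+1) ω‖ ^ 2 ∂P.μ
      = ∫ ω, ‖Yf ω‖ ^ 2 ∂P.μ + ∫ ω, 2 * (inner ℝ (Yf ω) (S.nfun r ω) : ℝ) ∂P.μ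
        + ∫ ω, ‖S.nfun r ω‖ ^ 2 ∂P.μ := by
    have hI12 : Integrable
        (fun ω => ‖Yf ω‖ ^ 2 + 2 * (inner ℝ (Yf ω) (S.nfun r ω) : ℝ)) P.μ := hI1.add hI2
    rw [hpt, integral_add hI12 hI3, integral_add hI1 hI2]
  have hcross : ∫ ω, (inner ℝ (Yf ω) (S.nfun r ω) : ℝ) ∂P.μ = 0 := by
    have hZ2 : ∀ i : Fin N, MemLp (fun ω => S.G r i ω - P.g i (S.x r i ω)) 2 P.μ := fun i =>
      (S.hmeas r i).sub (memℒp_g_comp ((S.memℒp_xuc r).1 i) i)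
    have hpt2 : (fun ω => (inner ℝ (Yf ω) (S.nfun r ω) : ℝ))
        = fun ω => (N:ℝ)⁻¹ * ∑ i, (inner ℝ (Yf ω) (S.G r i ω - P.g i (S.x r i ω)) : ℝ) := by
      funext ω
      show (inner ℝ (Yf ω) ((N:ℝ)⁻¹ • ∑ i, (S.G r i ω - P.g i (S.x r i ω))) : ℝ) = _
      rw [real_inner_smul_right, inner_sum]
    rw [hpt2, integral_const_mul,
      integral_finset_sum _ (fun i _ => integrable_inner2 hY2 (hZ2 i)),
      Finset.sum_eq_zero (fun i _ => S.integral_inner_noise r i hYm hY2), mul_zero]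
  have hYb : ∫ ω, ‖Yf ω‖ ^ 2 ∂P.μ
      ≤ P.β * ∫ ω, ‖S.vfun r ω‖ ^ 2 ∂P.μ + (1 - P.β)⁻¹ * ∫ ω, ‖S.bfun r ω‖ ^ 2 ∂P.μ := by
    have hIR : Integrable
        (fun ω => P.β * ‖S.vfun r ω‖ ^ 2 + (1 - P.β)⁻¹ * ‖S.bfun r ω‖ ^ 2) P.μ :=
      ((int_normsq hv2).const_mul _).add ((int_normsq hb2).const_mul _)
    calc ∫ ω, ‖Yf ω‖ ^ 2 ∂P.μ
        ≤ ∫ ω, (P.β * ‖S.vfun r ω‖ ^ 2 + (1 - P.β)⁻¹ * ‖S.bfun r ω‖ ^ 2) ∂P.μ :=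
          integral_mono hI1 hIR (fun ω => step_ptwise P.hβ0 P.hβ1 _ _)
      _ = P.β * ∫ ω, ‖S.vfun r ω‖ ^ 2 ∂P.μ + (1 - P.β)⁻¹ * ∫ ω, ‖S.bfun r ω‖ ^ 2 ∂P.μ := by
          rw [integral_add ((int_normsq hv2).const_mul _) ((int_normsq hb2).const_mul _),
            integral_const_mul, integral_const_mul]
  have hbb : (1 - P.β)⁻¹ * ∫ ω, ‖S.bfun r ω‖ ^ 2 ∂P.μ
      ≤ (1 - P.β)⁻¹ * (P.L ^ 2 * S.Xi r) :=
    mul_le_mul_of_nonneg_left (S.integral_bsq_le r) (inv_nonneg.2 ht.le)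
  have hnn := S.integral_nsq_le r
  rw [hsplit, integral_const_mul, hcross, mul_zero]
  linarith

/-- Main induction. -/
lemma main_bound (S : MTRun P) : ∀ r : ℕ,
    ∫ ω, ‖S.vfun r ω‖ ^ 2 ∂P.μ
      ≤ P.L ^ 2 / (1 - P.β) * ∑ k ∈ Finset.range r, P.β ^ (r - 1 - k) * S.Xi k
        + P.σ ^ 2 / (N : ℝ) * ∑ k ∈ Finset.range r, P.β ^ k := by
  intro r
  induction r with
  | zero =>
    rw [S.vfun_zero]
    simp
  | succ r ih =>
    have hstep := S.integral_step r
    have ht : (0:ℝ) < 1 - P.β := tpos P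
    have hβih := mul_le_mul_of_nonneg_left ih P.hβ0
    have e1 : ∑ k ∈ Finset.range (r+1), P.β ^ (r + 1 - 1 - k) * S.Xi k
        = P.β * ∑ k ∈ Finset.range r, P.β ^ (r - 1 - k) * S.Xi k + S.Xi r := by
      rw [Finset.sum_range_succ, Finset.mul_sum]
      congr 1
      · apply Finset.sum_congr rfl
        intro k hk
        have hk' := Finset.mem_range.1 hk
        have hexp : r + 1 - 1 - k = (r - 1 - k) + 1 := by omega
        rw [hexp, pow_succ]
        ring
      · simp
    have e2 : ∑ k ∈ Finset.range (r+1), P.β ^ k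
        = P.β * ∑ k ∈ Finset.range r, P.β ^ k + 1 := by
      rw [Finset.sum_range_succ', Finset.mul_sum]
      simp [pow_succ, mul_comm]
    calc ∫ ω, ‖S.vfun (r+1) ω‖ ^ 2 ∂P.μ
        ≤ P.β * ∫ ω, ‖S.vfun r ω‖ ^ 2 ∂P.μ
            + (1 - P.β)⁻¹ * (P.L ^ 2 * S.Xi r) + P.σ ^ 2 / (N:ℝ) := hstep
      _ ≤ P.β * (P.L ^ 2 / (1 - P.β) * ∑ k ∈ Finset.range r, P.β ^ (r - 1 - k) * S.Xi k
            + P.σ ^ 2 / (N:ℝ) * ∑ k ∈ Finset.range r, P.β ^ k)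
            + (1 - P.β)⁻¹ * (P.L ^ 2 * S.Xi r) + P.σ ^ 2 / (N:ℝ) := by linarith
      _ = P.L ^ 2 / (1 - P.β) * ∑ k ∈ Finset.range (r+1), P.β ^ (r + 1 - 1 - k) * S.Xi k
            + P.σ ^ 2 / (N:ℝ) * ∑ k ∈ Finset.range (r+1), P.β ^ k := by
          rw [e1, e2]
          ring

end Aux

end MTRun

/-- **Lemma** (bound on `‖ū − d̄‖²`): for every round `r ≥ 0`,
`E‖ū^{(r+1)} − d̄^{(r+1)}‖² ≤ (L²/(1−β)) ∑_{k=0}^{r} β^{r−k} Ξ^{(k)} + σ²/(N(1−β)²)`. -/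
theorem ubar_minus_dbar_bound
    (N d : ℕ) (Ω : Type) [mΩ : MeasurableSpace Ω]
    (P : MTProblem N d Ω) (S : MTRun P) :
    ∀ r : ℕ,
      ∫ ω, ‖S.ubar (r + 1) ω - S.dbar (r + 1) ω‖ ^ 2 ∂P.μ ≤
        P.L ^ 2 / (1 - P.β) * ∑ k ∈ Finset.range (r + 1), P.β ^ (r - k) * S.Xi k
          + P.σ ^ 2 / ((N : ℝ) * (1 - P.β) ^ 2) := by
  intro r
  haveI := P.prob
  have ht : (0:ℝ) < 1 - P.β := by linarith [P.hβ1]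
  have hN0 : (0:ℝ) < (N:ℝ) := by exact_mod_cast P.hN
  have h := S.main_bound (r+1)
  simp only [Nat.add_sub_cancel] at h
  have hgeom : ∑ k ∈ Finset.range (r+1), P.β ^ k ≤ (1 - P.β)⁻¹ := by
    have hmul := geom_sum_mul P.β (r+1)
    have h2 : (∑ k ∈ Finset.range (r+1), P.β ^ k) * (1 - P.β) ≤ 1 := by
      have hp : 0 ≤ P.β ^ (r+1) := pow_nonneg P.hβ0 (r+1)
      nlinarith [hmul]
    calc ∑ k ∈ Finset.range (r+1), P.β ^ k
        = ((∑ k ∈ Finset.range (r+1), P.β ^ k) * (1 - P.β)) * (1 - P.β)⁻¹ := by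
          field_simp
      _ ≤ 1 * (1 - P.β)⁻¹ := mul_le_mul_of_nonneg_right h2 (inv_nonneg.2 ht.le)
      _ = (1 - P.β)⁻¹ := one_mul _
  have hσ : P.σ ^ 2 / (N:ℝ) * ∑ k ∈ Finset.range (r+1), P.β ^ k
      ≤ P.σ ^ 2 / ((N:ℝ) * (1 - P.β) ^ 2) := by
    have h1 : P.σ ^ 2 / (N:ℝ) * ∑ k ∈ Finset.range (r+1), P.β ^ k
        ≤ P.σ ^ 2 / (N:ℝ) * (1 - P.β)⁻¹ :=
      mul_le_mul_of_nonneg_left hgeom (by positivity)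
    have h2 : P.σ ^ 2 / (N:ℝ) * (1 - P.β)⁻¹ = P.σ ^ 2 / ((N:ℝ) * (1 - P.β)) := by
      field_simp
    have h3 : P.σ ^ 2 / ((N:ℝ) * (1 - P.β)) ≤ P.σ ^ 2 / ((N:ℝ) * (1 - P.β) ^ 2) := by
      apply div_le_div_of_nonneg_left (sq_nonneg P.σ) (by positivity)
      nlinarith [mul_nonneg (mul_nonneg hN0.le ht.le) P.hβ0]
    linarith
  calc ∫ ω, ‖S.ubar (r + 1) ω - S.dbar (r + 1) ω‖ ^ 2 ∂P.μ
      ≤ P.L ^ 2 / (1 - P.β) * ∑ k ∈ Finset.range (r+1), P.β ^ (r - k) * S.Xi k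
        + P.σ ^ 2 / (N:ℝ) * ∑ k ∈ Finset.range (r+1), P.β ^ k := h
    _ ≤ P.L ^ 2 / (1 - P.β) * ∑ k ∈ Finset.range (r+1), P.β ^ (r - k) * S.Xi k
        + P.σ ^ 2 / ((N:ℝ) * (1 - P.β) ^ 2) := by linarith

end
end
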